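/- arXiv:1903.09970 — 2 statements merged into one kernel-verified Lean document; each statement's English description precedes it below -/
import Mathlib

section
/- For any j, k, x ∈ ℝ³ with (j + k)·x = 0, the row vector jᵀ A(j,k,x) is zero, i.e. Aᵀ(j,k,x) j = 0. -/
open Matrix

def crossMat (a : Fin 3 → ℝ) : Matrix (Fin 3) (Fin 3) ℝ :=
  !![0, -a 2, a 1; a 2, 0, -a 0; -a 1, a 0, 0]

def Amat (j k x : Fin 3 → ℝ) : Matrix (Fin 3) (Fin 3) ℝ :=
  vecMulVec x (crossProduct k j) - (k ⬝ᵥ x) • crossMat k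

/-- If `(j + k)·x = 0` then `jᵀ A(j,k,x) = 0`. -/
theorem Amat_divergence_free (j k x : Fin 3 → ℝ) (h : (j + k) ⬝ᵥ x = 0) :
    vecMul j (Amat j k x) = 0 := by
  simp only [dotProduct, Fin.sum_univ_three, Pi.add_apply] at h
  funext i
  fin_cases i <;>
    simp [Amat, crossMat, vecMul, crossProduct, vecMulVec, dotProduct,
      Fin.sum_univ_three]
  · linear_combination (k 1 * j 2 - k 2 * j 1) * h
  · linear_combination (k 2 * j 0 - k 0 * j 2) * h
  · linear_combination (k 0 * j 1 - k 1 * j 0) * h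
end

section
/- Let p ∈ ℤ³ be nonzero and Γ ∈ ℝ³ nonzero with Γ·p = 0, and let n = Γ × p. The set L = { a ∈ ℤ³ : n·a = 0 } is a subgroup of ℤ³ of rank at least 1 (it contains p), and its rank equals 2 if and only if Γ is a real scalar multiple of an integer vector. -/
/-!
Write `P` for `p` viewed in `ℝ³` and `n = Γ × P`. Since `Γ · P = 0`, the vector triple product gives
`P × n = (P · P) Γ`, so `n ≠ 0`, and `Γ` is a real multiple of an integer vector iff `n` is. The
lattice `L` is the kernel of `a ↦ n · a` on `ℤ³`, whose image is the subgroup of `ℝ` generated by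
the entries of `n`; by rank–nullity `L` has rank `2` iff this image, a free group of positive rank,
is cyclic, i.e. iff `n` is a real multiple of an integer vector.
-/

open Matrix

/-- The ℤ-linear functional `a ↦ n · a` (with `a ∈ ℤ³` cast to `ℝ³`). -/
noncomputable def dotWith (n : Fin 3 → ℝ) : (Fin 3 → ℤ) →ₗ[ℤ] ℝ where
  toFun a := n ⬝ᵥ (fun i => (a i : ℝ))
  map_add' a b := by
    simp [dotProduct, mul_add, Finset.sum_add_distrib]
  map_smul' c a := by
    simp [dotProduct, Finset.mul_sum, mul_left_comm]

lemma RingHom.map_cross {R S : Type*} [CommRing R] [CommRing S] (f : R →+* S) (u v : Fin 3 → R) :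
    (fun i => f ((u ⨯₃ v) i)) = (fun i => f (u i)) ⨯₃ (fun i => f (v i)) := by
  ext i; fin_cases i <;> simp [cross_apply]

def IsRealMultipleOfInt {ι : Type*} (v : ι → ℝ) : Prop :=
  ∃ c : ℝ, c ≠ 0 ∧ ∃ m : ι → ℤ, v = c • fun i => (m i : ℝ)

namespace IsRealMultipleOfInt

variable {ι : Type*} {v : ι → ℝ}

lemma of_eq_smul (c : ℝ) (m : ι → ℤ) (h : v = c • fun i => (m i : ℝ)) :
    IsRealMultipleOfInt v := by
  rcases eq_or_ne c 0 with rfl | hc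
  · exact ⟨1, one_ne_zero, 0, by ext; simp [h]⟩
  · exact ⟨c, hc, m, h⟩

lemma smul (hv : IsRealMultipleOfInt v) (a : ℝ) : IsRealMultipleOfInt (a • v) := by
  obtain ⟨c, -, m, rfl⟩ := hv
  exact of_eq_smul (a * c) m (smul_smul a c _)

lemma cross_intCast {v : Fin 3 → ℝ} (hv : IsRealMultipleOfInt v)
    (p : Fin 3 → ℤ) : IsRealMultipleOfInt (v ⨯₃ fun i => (p i : ℝ)) := by
  obtain ⟨c, -, m, rfl⟩ := hv
  refine .of_eq_smul c (m ⨯₃ p) ?_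
  rw [map_smul, LinearMap.smul_apply]
  exact congrArg (c • ·) ((Int.castRingHom ℝ).map_cross m p).symm

lemma intCast_cross {v : Fin 3 → ℝ} (hv : IsRealMultipleOfInt v)
    (p : Fin 3 → ℤ) : IsRealMultipleOfInt ((fun i => (p i : ℝ)) ⨯₃ v) := by
  rw [← cross_anticomm, ← neg_one_smul ℝ]
  exact (hv.cross_intCast p).smul (-1)

end IsRealMultipleOfInt

lemma cross_cross_self_of_dotProduct_eq_zero {R : Type*} [CommRing R] {u v : Fin 3 → R}
    (h : u ⬝ᵥ v = 0) : v ⨯₃ (u ⨯₃ v) = (v ⬝ᵥ v) • u := by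
  rw [cross_cross_eq_smul_sub_smul', h, zero_smul, sub_zero]

lemma cross_ne_zero_of_dotProduct_eq_zero {K : Type*} [Field K] {u v : Fin 3 → K}
    (h : u ⬝ᵥ v = 0) (hu : u ≠ 0) (hv : v ⬝ᵥ v ≠ 0) : u ⨯₃ v ≠ 0 := by
  intro huv
  have hcc := cross_cross_self_of_dotProduct_eq_zero h
  rw [huv, map_zero, eq_comm, smul_eq_zero] at hcc
  exact hu (hcc.resolve_left hv)

lemma intCast_dotProduct_self_ne_zero {p : Fin 3 → ℤ} (hp : p ≠ 0) :
    (fun i => (p i : ℝ)) ⬝ᵥ (fun i => (p i : ℝ)) ≠ 0 := by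
  intro h
  apply hp
  apply dotProduct_self_eq_zero.mp
  exact Int.cast_eq_zero.mp (((Int.castRingHom ℝ).map_dotProduct p p).trans h)

lemma isRealMultipleOfInt_cross_intCast_iff {Γ : Fin 3 → ℝ} {p : Fin 3 → ℤ} (hp : p ≠ 0)
    (hperp : Γ ⬝ᵥ (fun i => (p i : ℝ)) = 0) :
    IsRealMultipleOfInt (Γ ⨯₃ fun i => (p i : ℝ)) ↔ IsRealMultipleOfInt Γ := by
  refine ⟨fun h => ?_, fun h => h.cross_intCast p⟩
  set P : Fin 3 → ℝ := fun i => (p i : ℝ)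
  have hPP : P ⬝ᵥ P ≠ 0 := intCast_dotProduct_self_ne_zero hp
  have hΓ := congrArg ((P ⬝ᵥ P)⁻¹ • ·) (cross_cross_self_of_dotProduct_eq_zero hperp)
  simp only [smul_smul, inv_mul_cancel₀ hPP, one_smul] at hΓ
  exact hΓ ▸ (h.intCast_cross p).smul _

lemma dotWith_apply (n : Fin 3 → ℝ) (a : Fin 3 → ℤ) :
    dotWith n a = n ⬝ᵥ (fun i => (a i : ℝ)) := rfl

lemma dotWith_single (n : Fin 3 → ℝ) (i : Fin 3) : dotWith n (Pi.single i 1) = n i := by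
  simp [dotWith, Pi.single_apply, dotProduct]

lemma dotWith_smul_intCast (c : ℝ) (m a : Fin 3 → ℤ) :
    dotWith (c • fun i => (m i : ℝ)) a = (m ⬝ᵥ a) • c := by
  rw [dotWith_apply, smul_dotProduct, zsmul_eq_mul, mul_comm, smul_eq_mul]
  congr 1
  exact ((Int.castRingHom ℝ).map_dotProduct m a).symm

lemma finrank_range_dotWith_le_one_iff (n : Fin 3 → ℝ) :
    Module.finrank ℤ (LinearMap.range (dotWith n)) ≤ 1 ↔ IsRealMultipleOfInt n := by
  constructor
  · intro h
    obtain ⟨⟨c, _⟩, hc⟩ := finrank_le_one_iff.mp h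
    choose m hm using fun i => hc ⟨n i, dotWith_single n i ▸ LinearMap.mem_range_self _ _⟩
    refine .of_eq_smul c m (funext fun i => ?_)
    simpa [mul_comm] using (congrArg Subtype.val (hm i)).symm
  · rintro ⟨c, -, m, rfl⟩
    have hle : LinearMap.range (dotWith (c • fun i => (m i : ℝ))) ≤ Submodule.span ℤ {c} := by
      rintro _ ⟨a, rfl⟩
      exact Submodule.mem_span_singleton.mpr ⟨m ⬝ᵥ a, (dotWith_smul_intCast c m a).symm⟩
    calc _ ≤ Module.finrank ℤ (Submodule.span ℤ {c}) := Submodule.finrank_mono hle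
         _ ≤ 1 := by simpa using finrank_span_le_card (R := ℤ) ({c} : Set ℝ)

universe u in
lemma LinearMap.finrank_range_add_finrank_ker_of_finite {R : Type*} {M N : Type u} [Ring R]
    [HasRankNullity.{u} R] [StrongRankCondition R] [AddCommGroup M] [Module R M]
    [Module.Finite R M] [AddCommGroup N] [Module R N] (f : M →ₗ[R] N) :
    Module.finrank R (range f) + Module.finrank R (ker f) = Module.finrank R M := by
  rw [← f.quotKerEquivRange.finrank_eq, Submodule.finrank_quotient_add_finrank]

/-- The lattice `L = { a ∈ ℤ³ : (Γ×p)·a = 0 }` contains `p`, has rank at least 1,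
and has rank 2 iff `Γ` is a nonzero real multiple of an integer vector. -/
theorem lattice_rank_two_iff (p : Fin 3 → ℤ) (hp : p ≠ 0) (Γ : Fin 3 → ℝ) (hΓ : Γ ≠ 0)
    (hperp : Γ ⬝ᵥ (fun i => (p i : ℝ)) = 0) :
    p ∈ LinearMap.ker (dotWith (crossProduct Γ (fun i => (p i : ℝ)))) ∧
    1 ≤ Module.finrank ℤ
        (LinearMap.ker (dotWith (crossProduct Γ (fun i => (p i : ℝ))))) ∧
    (Module.finrank ℤ
        (LinearMap.ker (dotWith (crossProduct Γ (fun i => (p i : ℝ))))) = 2 ↔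
      ∃ c : ℝ, c ≠ 0 ∧ ∃ m : Fin 3 → ℤ, Γ = c • fun i => (m i : ℝ)) := by
  change _ ∧ _ ∧ (_ ↔ IsRealMultipleOfInt Γ)
  rw [← isRealMultipleOfInt_cross_intCast_iff hp hperp, ← finrank_range_dotWith_le_one_iff]
  set P : Fin 3 → ℝ := fun i => (p i : ℝ)
  set φ := dotWith (Γ ⨯₃ P)
  have hmem : p ∈ LinearMap.ker φ := by
    rw [LinearMap.mem_ker, dotWith_apply, dotProduct_comm]
    exact dot_cross_self Γ P
  obtain ⟨i, hi⟩ := Function.ne_iff.mp <|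
    cross_ne_zero_of_dotProduct_eq_zero hperp hΓ (intCast_dotProduct_self_ne_zero hp)
  have hrange : 1 ≤ Module.finrank ℤ (LinearMap.range φ) :=
    Submodule.one_le_finrank_iff.mpr <| (Submodule.ne_bot_iff _).mpr
      ⟨_, ⟨Pi.single i 1, dotWith_single _ i⟩, hi⟩
  have hsum := φ.finrank_range_add_finrank_ker_of_finite
  rw [Module.finrank_fin_fun] at hsum
  have hker : 1 ≤ Module.finrank ℤ (LinearMap.ker φ) :=
    Submodule.one_le_finrank_iff.mpr <| (Submodule.ne_bot_iff _).mpr ⟨p, hmem, hp⟩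
  refine ⟨hmem, hker, ?_⟩
  omega
end
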